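/- Let I ⊆ ℚ[x_1,…,x_n] be an ideal and let B be a family of homogeneous polynomials whose images form a ℚ-vector-space basis of ℚ[x_1,…,x_n]/gr I. Then the images of the elements of B form a ℚ-vector-space basis of ℚ[x_1,…,x_n]/I. -/

import Mathlib

/-!
If `I ⊆ ℚ[x_1,…,x_n]` is an ideal and `B` a family of homogeneous polynomials whose
images form a `ℚ`-basis of `ℚ[x]/gr I`, then the images of `B` form a `ℚ`-basis of
`ℚ[x]/I`.  Here `gr I` is the ideal generated by the top-degree parts `τ(f)` of the
nonzero `f ∈ I`.
-/

noncomputable section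

/-- The associated graded ideal `gr I`, generated by the top-degree homogeneous
components of the nonzero elements of `I`. -/
def grIdeal {n : ℕ} (I : Ideal (MvPolynomial (Fin n) ℚ)) :
    Ideal (MvPolynomial (Fin n) ℚ) :=
  Ideal.span {g | ∃ f ∈ I, f ≠ 0 ∧
    g = MvPolynomial.homogeneousComponent f.totalDegree f}

open MvPolynomial Finset

abbrev P (n : ℕ) := MvPolynomial (Fin n) ℚ

-- helper: sum of homogeneous components over any large enough range
lemma sum_hc {n : ℕ} (p : P n) {N : ℕ} (h : p.totalDegree < N) :
    ∑ i ∈ range N, homogeneousComponent i p = p := by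
  refine (Finset.sum_subset (Finset.range_subset_range.mpr h) ?_).symm.trans
    (MvPolynomial.sum_homogeneousComponent p)
  intro i _ hi
  exact homogeneousComponent_eq_zero i p (by simpa using hi)

lemma hc_mul_left {n : ℕ} {a : P n} {i : ℕ} (ha : a.IsHomogeneous i) (g : P n) (d : ℕ) :
    homogeneousComponent (i + d) (a * g) = a * homogeneousComponent d g := by
  set N := max g.totalDegree d + 1 with hN
  have h1 : g.totalDegree < N := by omega
  conv_lhs => rw [← sum_hc g h1, Finset.mul_sum, map_sum]
  have h2 : ∀ e, homogeneousComponent (i + d) (a * homogeneousComponent e g)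
      = if d = e then a * homogeneousComponent e g else 0 := by
    intro e
    have hm : a * homogeneousComponent e g ∈ homogeneousSubmodule (Fin n) ℚ (i + e) :=
      mem_homogeneousSubmodule _ _ |>.mpr (ha.mul (homogeneousComponent_isHomogeneous e g))
    rw [homogeneousComponent_of_mem hm]
    simp [Nat.add_right_cancel_iff]
  simp_rw [h2]
  rw [Finset.sum_ite_eq (range N) d]
  simp [hN]

lemma hc_mul_left_zero {n : ℕ} {a : P n} {i : ℕ} (ha : a.IsHomogeneous i) (g : P n) {d : ℕ}
    (hd : d < i) : homogeneousComponent d (a * g) = 0 := by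
  have h1 : g.totalDegree < g.totalDegree + 1 := lt_add_one _
  conv_lhs => rw [← sum_hc g h1, Finset.mul_sum, map_sum]
  apply Finset.sum_eq_zero
  intro e _
  have hm : a * homogeneousComponent e g ∈ homogeneousSubmodule (Fin n) ℚ (i + e) :=
    mem_homogeneousSubmodule _ _ |>.mpr (ha.mul (homogeneousComponent_isHomogeneous e g))
  rw [homogeneousComponent_of_mem hm, if_neg (by omega)]

lemma lead_ne {n : ℕ} {p : P n} (hp : p ≠ 0) :
    homogeneousComponent p.totalDegree p ≠ 0 := by
  obtain ⟨m, hm, hdeg⟩ := p.support.exists_mem_eq_sup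
    (Finset.nonempty_iff_ne_empty.mpr (mt MvPolynomial.support_eq_empty.mp hp)) (fun s => s.sum fun _ e => e)
  intro h
  have := coeff_homogeneousComponent p.totalDegree p m
  rw [h] at this
  simp only [coeff_zero] at this
  rw [if_pos] at this
  · exact (MvPolynomial.mem_support_iff.mp hm) this.symm
  · show m.degree = p.totalDegree
    rw [MvPolynomial.totalDegree, hdeg]
    simp [Finsupp.degree, Finsupp.sum]
    rfl

/-- membership predicate for degree-`d` parts of elements of `I` of degree ≤ `d` -/
def Wmem {n : ℕ} (I : Ideal (P n)) (d : ℕ) (h : P n) : Prop :=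
  ∃ f ∈ I, f.totalDegree ≤ d ∧ homogeneousComponent d f = h

lemma W_zero {n : ℕ} (I : Ideal (P n)) (d : ℕ) : Wmem I d 0 :=
  ⟨0, I.zero_mem, by simp, by simp⟩

lemma W_add {n : ℕ} {I : Ideal (P n)} {d : ℕ} {h₁ h₂ : P n}
    (H1 : Wmem I d h₁) (H2 : Wmem I d h₂) : Wmem I d (h₁ + h₂) := by
  obtain ⟨f₁, hf₁, hd₁, rfl⟩ := H1
  obtain ⟨f₂, hf₂, hd₂, rfl⟩ := H2
  exact ⟨f₁ + f₂, I.add_mem hf₁ hf₂,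
    (totalDegree_add f₁ f₂).trans (max_le hd₁ hd₂), map_add _ _ _⟩

lemma W_mul {n : ℕ} {I : Ideal (P n)} {j : ℕ} {h : P n} (H : Wmem I j h)
    (a : P n) (i : ℕ) : Wmem I (i + j) (homogeneousComponent i a * h) := by
  obtain ⟨f, hf, hd, rfl⟩ := H
  refine ⟨homogeneousComponent i a * f, I.mul_mem_left _ hf, ?_, ?_⟩
  · exact (totalDegree_mul _ _).trans
      (add_le_add ((homogeneousComponent_isHomogeneous i a).totalDegree_le) hd)
  · exact hc_mul_left (homogeneousComponent_isHomogeneous i a) f j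

/-- `gr I` is a homogeneous ideal. -/
lemma hc_grIdeal {n : ℕ} (I : Ideal (P n)) {g : P n} (hg : g ∈ grIdeal I) (d : ℕ) :
    homogeneousComponent d g ∈ grIdeal I := by
  induction hg using Submodule.span_induction generalizing d with
  | mem x hx =>
    obtain ⟨f, hfI, hf0, rfl⟩ := hx
    rw [homogeneousComponent_of_mem (homogeneousComponent_mem _ f)]
    split
    · exact Ideal.subset_span ⟨f, hfI, hf0, rfl⟩
    · exact (grIdeal I).zero_mem
  | zero => simp only [map_zero]; exact (grIdeal I).zero_mem
  | add x y hx hy ihx ihy =>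
    rw [map_add]; exact (grIdeal I).add_mem (ihx d) (ihy d)
  | smul a x hx ih =>
    rw [smul_eq_mul]
    have hax : a * x = ∑ i ∈ range (a.totalDegree + 1), homogeneousComponent i a * x := by
      rw [← Finset.sum_mul, sum_hc a (lt_add_one _)]
    rw [hax, map_sum]
    apply Submodule.sum_mem
    intro i _
    rcases le_or_gt i d with hid | hid
    · have : d = i + (d - i) := by omega
      rw [this, hc_mul_left (homogeneousComponent_isHomogeneous i a) x (d - i)]
      exact Ideal.mul_mem_left _ _ (ih (d - i))
    · rw [hc_mul_left_zero (homogeneousComponent_isHomogeneous i a) x hid]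
      exact (grIdeal I).zero_mem

lemma hc_W {n : ℕ} (I : Ideal (P n)) {g : P n} (hg : g ∈ grIdeal I) (d : ℕ) :
    Wmem I d (homogeneousComponent d g) := by
  induction hg using Submodule.span_induction generalizing d with
  | mem x hx =>
    obtain ⟨f, hfI, hf0, rfl⟩ := hx
    rw [homogeneousComponent_of_mem (homogeneousComponent_mem _ f)]
    split
    · next h => exact ⟨f, hfI, h.ge, by rw [h]⟩
    · exact W_zero I d
  | zero => simp only [map_zero]; exact W_zero I d
  | add x y hx hy ihx ihy => rw [map_add]; exact W_add (ihx d) (ihy d)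
  | smul a x hx ih =>
    rw [smul_eq_mul]
    have hax : a * x = ∑ i ∈ range (a.totalDegree + 1), homogeneousComponent i a * x := by
      rw [← Finset.sum_mul, sum_hc a (lt_add_one _)]
    rw [hax, map_sum]
    apply Finset.sum_induction _ (Wmem I d) (fun _ _ => W_add) (W_zero I d)
    intro i _
    rcases le_or_gt i d with hid | hid
    · have he : d = i + (d - i) := by omega
      rw [he, hc_mul_left (homogeneousComponent_isHomogeneous i a) x (d - i)]
      exact W_mul (ih (d - i)) a i
    · rw [hc_mul_left_zero (homogeneousComponent_isHomogeneous i a) x hid]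
      exact W_zero I d

lemma mk_smul {n : ℕ} (I : Ideal (P n)) (c : ℚ) (p : P n) :
    Ideal.Quotient.mk I (c • p) = c • Ideal.Quotient.mk I p := by
  rw [← Ideal.Quotient.mkₐ_eq_mk ℚ]; exact map_smul _ c p

set_option maxHeartbeats 1000000 in
theorem basis_of_gr_basis {n : ℕ} {ι : Type*} (I : Ideal (MvPolynomial (Fin n) ℚ))
    (B : ι → MvPolynomial (Fin n) ℚ)
    (hhom : ∀ i, ∃ d, (B i).IsHomogeneous d)
    (hind : LinearIndependent ℚ
      (fun i : ι => Ideal.Quotient.mk (grIdeal I) (B i)))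
    (hspan : Submodule.span ℚ
      (Set.range fun i : ι => Ideal.Quotient.mk (grIdeal I) (B i)) = ⊤) :
    LinearIndependent ℚ (fun i : ι => Ideal.Quotient.mk I (B i)) ∧
      Submodule.span ℚ (Set.range fun i : ι => Ideal.Quotient.mk I (B i)) = ⊤ := by
  classical
  set dB : ι → ℕ := fun i => (hhom i).choose with hdB
  have hBmem : ∀ i, B i ∈ homogeneousSubmodule (Fin n) ℚ (dB i) :=
    fun i => (mem_homogeneousSubmodule _ _).mpr (hhom i).choose_spec
  have hind' := linearIndependent_iff'.mp hind
  -- key fact used twice: a combination of the B i lying in grIdeal has coefficients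
  -- of its homogeneous pieces vanishing; we use the filtered version
  have key0 : ∀ (s : Finset ι) (c : ι → ℚ) (D : ℕ),
      (∑ i ∈ s with dB i = D, c i • B i) ∈ grIdeal I → ∀ i ∈ s, dB i = D → c i = 0 := by
    intro s c D hmem i hi hdi
    have h0 : ∑ j ∈ s with dB j = D, c j • Ideal.Quotient.mk (grIdeal I) (B j) = 0 := by
      have := (Ideal.Quotient.eq_zero_iff_mem).mpr hmem
      rw [map_sum] at this
      simpa [mk_smul] using this
    exact hind' _ c h0 i (Finset.mem_filter.mpr ⟨hi, hdi⟩)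
  -- homogeneous component of a combination
  have hcomb : ∀ (s : Finset ι) (c : ι → ℚ) (D : ℕ),
      homogeneousComponent D (∑ i ∈ s, c i • B i) = ∑ i ∈ s with dB i = D, c i • B i := by
    intro s c D
    rw [map_sum, ← Finset.sum_filter_add_sum_filter_not s (fun i => dB i = D)]
    have h1 : ∀ i ∈ s.filter (fun i => dB i = D),
        homogeneousComponent D (c i • B i) = c i • B i := by
      intro i hi
      obtain ⟨-, hdi⟩ := Finset.mem_filter.mp hi
      rw [map_smul, homogeneousComponent_of_mem (hBmem i), if_pos hdi.symm]
    have h2 : ∀ i ∈ s.filter (fun i => ¬ dB i = D),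
        homogeneousComponent D (c i • B i) = 0 := by
      intro i hi
      obtain ⟨-, hdi⟩ := Finset.mem_filter.mp hi
      rw [map_smul, homogeneousComponent_of_mem (hBmem i), if_neg (fun h => hdi h.symm), smul_zero]
    rw [Finset.sum_congr rfl h1, Finset.sum_congr rfl h2, sum_const_zero, add_zero]
  constructor
  · -- linear independence
    rw [linearIndependent_iff']
    intro s c hsum i hi
    set q : P n := ∑ j ∈ s, c j • B j with hq
    have hqI : q ∈ I := by
      rw [← Ideal.Quotient.eq_zero_iff_mem, hq, map_sum]
      simpa [mk_smul] using hsum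
    rcases eq_or_ne q 0 with h0 | h0
    · -- q = 0 : use independence in gr quotient directly
      refine hind' s c ?_ i hi
      have : Ideal.Quotient.mk (grIdeal I) q = 0 := by rw [h0, map_zero]
      rw [hq, map_sum] at this
      simpa [mk_smul] using this
    · exfalso
      set D := q.totalDegree
      have hτ : homogeneousComponent D q ∈ grIdeal I :=
        Ideal.subset_span ⟨q, hqI, h0, rfl⟩
      rw [hq, hcomb s c D] at hτ
      have hzero : ∀ j ∈ s, dB j = D → c j = 0 := key0 s c D hτ
      have : homogeneousComponent D q = 0 := by
        rw [hq, hcomb s c D]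
        refine Finset.sum_eq_zero fun j hj => ?_
        obtain ⟨hjs, hdj⟩ := Finset.mem_filter.mp hj
        rw [hzero j hjs hdj, zero_smul]
      exact lead_ne h0 this
  · -- spanning
    set M := Submodule.span ℚ (Set.range fun i : ι => Ideal.Quotient.mk I (B i)) with hM
    have key : ∀ d : ℕ, ∀ p : P n, p.totalDegree ≤ d → Ideal.Quotient.mk I p ∈ M := by
      intro d
      induction d using Nat.strong_induction_on with
      | _ d IH =>
      intro p hpd
      have hmem : Ideal.Quotient.mk (grIdeal I) p ∈ Submodule.span ℚ
          (Set.range fun i : ι => Ideal.Quotient.mk (grIdeal I) (B i)) := by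
        rw [hspan]; trivial
      obtain ⟨c, hcs⟩ := Finsupp.mem_span_range_iff_exists_finsupp.mp hmem
      rw [Finsupp.sum] at hcs
      set g : P n := p - ∑ i ∈ c.support, c i • B i with hg
      have hgmem : g ∈ grIdeal I := by
        rw [← Ideal.Quotient.eq_zero_iff_mem, hg, map_sub, map_sum]
        simp only [mk_smul]
        rw [hcs, sub_self]
      -- all indices in the support have degree ≤ d
      have hsupp : ∀ i ∈ c.support, dB i ≤ d := by
        intro i hi
        by_contra hgt
        push_neg at hgt
        have hE : homogeneousComponent (dB i) g ∈ grIdeal I := hc_grIdeal I hgmem _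
        rw [hg, map_sub, hcomb c.support _ (dB i),
          homogeneousComponent_eq_zero _ p (lt_of_le_of_lt hpd hgt), zero_sub] at hE
        have hE' : (∑ j ∈ c.support with dB j = dB i, c j • B j) ∈ grIdeal I := by
          simpa using neg_mem hE
        have := key0 c.support (fun j => c j) (dB i) hE' i hi rfl
        exact Finsupp.mem_support_iff.mp hi this
      have hgd : g.totalDegree ≤ d := by
        rw [hg]
        refine (totalDegree_sub _ _).trans (max_le hpd ?_)
        refine (totalDegree_finset_sum _ _).trans (Finset.sup_le fun i hi => ?_)
        exact (totalDegree_smul_le _ _).trans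
          (((hhom i).choose_spec.totalDegree_le).trans (hsupp i hi))
      -- reduce the top component of g by an element of I
      obtain ⟨f, hfI, hfd, hf⟩ := hc_W I hgmem d
      set g' : P n := g - f with hg'
      have hmkp : Ideal.Quotient.mk I p
          = (∑ i ∈ c.support, c i • Ideal.Quotient.mk I (B i)) + Ideal.Quotient.mk I g' := by
        have : p = (∑ i ∈ c.support, c i • B i) + g' + f := by rw [hg', hg]; ring
        rw [this, map_add, map_add, map_sum, Ideal.Quotient.eq_zero_iff_mem.mpr hfI, add_zero]
        simp [mk_smul]
      rw [hmkp]
      refine M.add_mem (Submodule.sum_mem _ fun i _ => Submodule.smul_mem _ _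
        (Submodule.subset_span ⟨i, rfl⟩)) ?_
      rcases eq_or_ne g' 0 with h0 | h0
      · rw [h0, map_zero]; exact M.zero_mem
      · have hg'd : g'.totalDegree ≤ d :=
          (totalDegree_sub _ _).trans (max_le hgd hfd)
        have hg'top : homogeneousComponent d g' = 0 := by
          rw [hg', map_sub, hf, sub_self]
        have hlt : g'.totalDegree < d := by
          rcases lt_or_eq_of_le hg'd with h | h
          · exact h
          · exact absurd (h ▸ hg'top) (lead_ne h0)
        exact IH _ hlt g' le_rfl
    rw [eq_top_iff]
    rintro x -
    obtain ⟨p, rfl⟩ := Ideal.Quotient.mk_surjective x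
    exact key p.totalDegree p le_rfl
end
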